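/- For the Random String model with k = 2 and 1-reach, the transfer matrix characteristic polynomial g(λ,b) = −(1/128)·λ³·(b − 2λ)(b − 4λ)(b³ + b²(−8λ + 1) + 2bλ(−1 + 10λ) + 4λ²(−4λ + 1)) satisfies: g(1,1) = 0, dg(1,b)/db |_{b=1} = −21/128, ((λ−1)/g(λ,1))|_{λ=1} = 64/15, and hence the implicit root derivative df₁/db |_{b=1} = (−21/128)·(64/15)·(−1)·(−1) = 7/10. Consequently γ_{2,1} = 7/10. -/

import Mathlib

/-!
Up to the prefactor `-(1/128) λ³ (b - 2λ)(b - 4λ)`, which does not vanish at `(1, 1)`,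
`g` is the cubic `C(λ, b)`, and `C(1, 1) = 0` with `∂C/∂b (1, 1) = 7`, `∂C/∂λ (1, 1) = -10`.
Hence the root branch through `(1, 1)` is a branch of `C = 0`, and implicit differentiation
gives slope `-7 / (-10) = 7/10`. Along `b = 1` the simple root factors out as
`g(λ, 1) = (λ - 1) q(λ)` with `q(1) = 15/64`.
-/

open Filter

/-- Characteristic polynomial of the transfer matrix for the Random String
model with `k = 2` and 1-reach. -/
noncomputable def gRS (l b : ℝ) : ℝ :=
  -(1 / 128) * l ^ 3 * (b - 2 * l) * (b - 4 * l) *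
    (b ^ 3 + b ^ 2 * (-8 * l + 1) + 2 * b * l * (-1 + 10 * l)
      + 4 * l ^ 2 * (-4 * l + 1))

open Topology

def cubicRS (l b : ℝ) : ℝ :=
  b ^ 3 + b ^ 2 * (-8 * l + 1) + 2 * b * l * (-1 + 10 * l) + 4 * l ^ 2 * (-4 * l + 1)

theorem gRS_eq_mul_cubicRS (l b : ℝ) :
    gRS l b = -(1 / 128) * l ^ 3 * (b - 2 * l) * (b - 4 * l) * cubicRS l b :=
  rfl

theorem cubicRS_one_one : cubicRS 1 1 = 0 := by
  norm_num [cubicRS]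

theorem HasDerivAt.cubicRS {f : ℝ → ℝ} {d b : ℝ} (hf : HasDerivAt f d b) :
    HasDerivAt (fun x => cubicRS (f x) x)
      ((3 * b ^ 2 + 2 * b * (1 - 8 * f b) + 2 * f b * (10 * f b - 1))
        + (-8 * b ^ 2 + 2 * b * (20 * f b - 1) + 8 * f b - 48 * f b ^ 2) * d) b := by
  have hb := hasDerivAt_id b
  have h := ((((hb.pow 3).add ((hb.pow 2).mul ((hf.const_mul (-8)).add_const 1))).add
    (((hb.const_mul 2).mul hf).mul ((hf.const_mul 10).const_add (-1)))).add
    (((hf.pow 2).const_mul 4).mul ((hf.const_mul (-4)).add_const 1)))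
  exact h.congr_deriv (by simp only [id, Pi.mul_apply, Pi.pow_apply]; ring)

theorem gRS_eq_sub_one_mul (l : ℝ) :
    gRS l 1 =
      (l - 1) * (-(1 / 128) * l ^ 3 * (1 - 2 * l) * (1 - 4 * l) * (-16 * l ^ 2 + 8 * l - 2)) := by
  simp only [gRS]; ring

theorem hasDerivAt_gRS_one : HasDerivAt (fun b => gRS 1 b) (-21 / 128) 1 := by
  have hb := hasDerivAt_id (1 : ℝ)
  have hprefactor := ((hb.sub_const 2).const_mul (-(1 / 128) : ℝ)).mul (hb.sub_const 4)
  have h := hprefactor.mul (hasDerivAt_const (1 : ℝ) (1 : ℝ)).cubicRS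
  refine (h.congr_deriv ?_).congr_of_eventuallyEq (.of_forall fun b => ?_)
  · norm_num [cubicRS_one_one]
  · simp only [gRS_eq_mul_cubicRS, Pi.mul_apply, id]; ring

theorem tendsto_sub_one_div_gRS_one :
    Tendsto (fun l => (l - 1) / gRS l 1) (𝓝[≠] 1) (𝓝 (64 / 15)) := by
  set q : ℝ → ℝ :=
    fun l => -(1 / 128) * l ^ 3 * (1 - 2 * l) * (1 - 4 * l) * (-16 * l ^ 2 + 8 * l - 2)
  have hq : ContinuousAt (fun l => (q l)⁻¹) 1 :=
    (by fun_prop : ContinuousAt q 1).inv₀ (by norm_num [q])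
  have hlim : Tendsto (fun l => (q l)⁻¹) (𝓝[≠] 1) (𝓝 (64 / 15)) := by
    convert hq.tendsto.mono_left nhdsWithin_le_nhds using 2
    norm_num [q]
  refine hlim.congr' ?_
  filter_upwards [self_mem_nhdsWithin] with l hl
  rw [gRS_eq_sub_one_mul, div_mul_cancel_left₀ (sub_ne_zero.mpr hl)]

theorem eventually_cubicRS_eq_zero {f : ℝ → ℝ} (hf1 : f 1 = 1) (hf : ContinuousAt f 1)
    (hroot : ∀ᶠ b in 𝓝 1, gRS (f b) b = 0) : ∀ᶠ b in 𝓝 1, cubicRS (f b) b = 0 := by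
  have hprefactor :
      ∀ᶠ b in 𝓝 (1 : ℝ), -(1 / 128) * f b ^ 3 * (b - 2 * f b) * (b - 4 * f b) ≠ 0 := by
    refine ContinuousAt.eventually_ne (by fun_prop) ?_
    norm_num [hf1]
  filter_upwards [hroot, hprefactor] with b hg hne
  rw [gRS_eq_mul_cubicRS] at hg
  exact (mul_eq_zero.mp hg).resolve_left hne

/-- Random String model, `k = 2`, 1-reach: `g(1,1) = 0`,
`dg(1,b)/db |_{b=1} = -21/128`, the removable-singularity value of
`(λ-1)/g(λ,1)` at `λ = 1` is `64/15`, and any implicitly defined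
differentiable root `f₁` with `f₁ 1 = 1` satisfies `f₁'(1) = 7/10`;
consequently `γ_{2,1} = 7/10`. -/
theorem gamma_21_RS :
    gRS 1 1 = 0 ∧
    deriv (fun b => gRS 1 b) 1 = -21 / 128 ∧
    Tendsto (fun l => (l - 1) / gRS l 1) (nhdsWithin 1 {(1 : ℝ)}ᶜ)
      (nhds (64 / 15)) ∧
    ∀ f₁ : ℝ → ℝ, f₁ 1 = 1 →
      (∀ᶠ b in nhds 1, gRS (f₁ b) b = 0) →
      DifferentiableAt ℝ f₁ 1 →
      deriv f₁ 1 = 7 / 10 := by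
  refine ⟨by rw [gRS_eq_mul_cubicRS, cubicRS_one_one, mul_zero], hasDerivAt_gRS_one.deriv,
    tendsto_sub_one_div_gRS_one, ?_⟩
  intro f₁ hf1 hroot hdiff
  have hC := eventually_cubicRS_eq_zero hf1 hdiff.continuousAt hroot
  have hslope := hdiff.hasDerivAt.cubicRS.unique
    ((hasDerivAt_const (1 : ℝ) (0 : ℝ)).congr_of_eventuallyEq hC)
  rw [hf1] at hslope
  linarith
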